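/- arXiv:math/0509191 — 4 statements merged into one kernel-verified Lean document; each statement's English description precedes it below -/
import Mathlib

section
/- Let q : ℂ⁴ → ℂ be the quadratic form q(z) = z₀² + z₁² + z₂² − z₃², and let Q = {[z] ∈ ℂP³ : q(z) = 0} be the corresponding projective quadric surface. Then every projective line contained in Q contains a real point, i.e., for every 2-dimensional ℂ-linear subspace W of ℂ⁴ on which q vanishes identically, there exists a nonzero vector w ∈ W that is a ℂ-scalar multiple of a vector with all four coordinates real. -/
/-- The quadratic form `q(z) = z₀² + z₁² + z₂² − z₃²` on `ℂ⁴`. -/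
noncomputable def q (z : Fin 4 → ℂ) : ℂ := z 0 ^ 2 + z 1 ^ 2 + z 2 ^ 2 - z 3 ^ 2

/-!
Write `h(z) = |z₀|² + |z₁|² + |z₂|² − |z₃|²`. For `z = x + iy` with `q z = 0`, the real vectors
`x, y` are Lorentz-orthogonal with equal Lorentz norms and `h z` is the sum of these norms;
two orthogonal vectors cannot both be timelike, so `h ≥ 0` on `W`. Since `W` is isotropic,
`h(v + w̄) = h v + h w` for `v, w ∈ W`. If `W ∩ W̄ = 0` then `W + W̄ = ℂ⁴`, so `h ≥ 0` on `ℂ⁴`,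
contradicting `h(e₃) = −1`. A nonzero `v ∈ W ∩ W̄` yields the real point `v + v̄`, or `v` itself
when `v + v̄ = 0`.
-/

open Module ComplexConjugate Complex

lemma nonneg_or_nonneg_of_lorentz_orthogonal {x₀ x₁ x₂ x₃ y₀ y₁ y₂ y₃ : ℝ}
    (h : x₀ * y₀ + x₁ * y₁ + x₂ * y₂ = x₃ * y₃) :
    0 ≤ x₀ ^ 2 + x₁ ^ 2 + x₂ ^ 2 - x₃ ^ 2 ∨ 0 ≤ y₀ ^ 2 + y₁ ^ 2 + y₂ ^ 2 - y₃ ^ 2 := by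
  by_contra! hneg
  obtain ⟨hx, hy⟩ := hneg
  have lagrange : (x₀ ^ 2 + x₁ ^ 2 + x₂ ^ 2) * (y₀ ^ 2 + y₁ ^ 2 + y₂ ^ 2)
      = (x₀ * y₀ + x₁ * y₁ + x₂ * y₂) ^ 2
        + ((x₀ * y₁ - x₁ * y₀) ^ 2 + (x₀ * y₂ - x₂ * y₀) ^ 2 + (x₁ * y₂ - x₂ * y₁) ^ 2) := by
    ring
  have hprod : (x₀ ^ 2 + x₁ ^ 2 + x₂ ^ 2) * (y₀ ^ 2 + y₁ ^ 2 + y₂ ^ 2) < x₃ ^ 2 * y₃ ^ 2 :=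
    mul_lt_mul'' (by linarith) (by linarith) (by positivity) (by positivity)
  rw [h, mul_pow] at lagrange
  nlinarith [sq_nonneg (x₀ * y₁ - x₁ * y₀), sq_nonneg (x₀ * y₂ - x₂ * y₀),
    sq_nonneg (x₁ * y₂ - x₂ * y₁)]

def qHerm (z : Fin 4 → ℂ) : ℝ :=
  normSq (z 0) + normSq (z 1) + normSq (z 2) - normSq (z 3)

def qPolar (v w : Fin 4 → ℂ) : ℂ := v 0 * w 0 + v 1 * w 1 + v 2 * w 2 - v 3 * w 3

lemma q_add (v w : Fin 4 → ℂ) : q (v + w) = q v + q w + 2 * qPolar v w := by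
  simp only [q, qPolar, Pi.add_apply]
  ring

lemma qHerm_add_star (v w : Fin 4 → ℂ) :
    qHerm (v + star w) = qHerm v + qHerm w + 2 * (qPolar v w).re := by
  simp only [qHerm, qPolar, Pi.add_apply, Pi.star_apply, normSq_add, RCLike.star_def, conj_conj,
    normSq_conj, add_re, sub_re]
  ring

lemma qHerm_nonneg_of_q_eq_zero {z : Fin 4 → ℂ} (hz : q z = 0) : 0 ≤ qHerm z := by
  have hre := congrArg re hz
  have him := congrArg im hz
  simp only [q, pow_two, add_re, sub_re, add_im, sub_im, mul_re, mul_im, zero_re,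
    zero_im] at hre him
  simp only [qHerm, normSq_apply]
  rcases nonneg_or_nonneg_of_lorentz_orthogonal (x₀ := (z 0).re) (x₁ := (z 1).re)
    (x₂ := (z 2).re) (x₃ := (z 3).re) (y₀ := (z 0).im) (y₁ := (z 1).im) (y₂ := (z 2).im)
    (y₃ := (z 3).im) (by linarith) with h | h <;> nlinarith

section Conj

variable {ι : Type*}

def Submodule.conj (W : Submodule ℂ (ι → ℂ)) : Submodule ℂ (ι → ℂ) :=
  W.comap (starLinearEquiv ℂ).toLinearMap

@[simp] lemma Submodule.mem_conj {W : Submodule ℂ (ι → ℂ)} {v : ι → ℂ} :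
    v ∈ W.conj ↔ star v ∈ W := Iff.rfl

lemma Submodule.finrank_conj (W : Submodule ℂ (ι → ℂ)) : finrank ℂ W.conj = finrank ℂ W := by
  let e : W.conj ≃+ W :=
    { toFun := fun v => ⟨star (v : ι → ℂ), v.2⟩
      invFun := fun w => ⟨star (w : ι → ℂ), by simp⟩
      left_inv := fun v => by simp
      right_inv := fun w => by simp
      map_add' := fun v w => by ext; simp }
  unfold finrank
  rw [rank_eq_of_equiv_equiv (conj : ℂ → ℂ) e (Function.Involutive.bijective star_star)
    fun c v => by ext; simp [e]]

lemma exists_real_point_of_star_mem {W : Submodule ℂ (ι → ℂ)} {v : ι → ℂ} (hv : v ∈ W)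
    (hv₀ : v ≠ 0) (hstar : star v ∈ W) :
    ∃ w ∈ W, w ≠ 0 ∧ ∃ (c : ℂ) (x : ι → ℝ), w = c • (fun i => (x i : ℂ)) := by
  have hsum : v + star v = fun i => ((2 * (v i).re : ℝ) : ℂ) := by
    funext i
    exact add_conj (v i)
  by_cases hre : v + star v = 0
  · refine ⟨v, hv, hv₀, I, fun i => (v i).im, funext fun i => ?_⟩
    have : (v i).re = 0 := by simpa using congrFun (hsum.symm.trans hre) i
    apply Complex.ext <;> simp [this]
  · exact ⟨v + star v, W.add_mem hv hstar, hre, 1, fun i => 2 * (v i).re, by simpa using hsum⟩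

end Conj

lemma inf_conj_ne_bot_of_isotropic {W : Submodule ℂ (Fin 4 → ℂ)} (hW : finrank ℂ W = 2)
    (hiso : ∀ w ∈ W, q w = 0) : W ⊓ W.conj ≠ ⊥ := by
  intro hbot
  have htop : W ⊔ W.conj = ⊤ :=
    Submodule.eq_top_of_disjoint _ _ (by simp [W.finrank_conj, hW]) (disjoint_iff.2 hbot)
  obtain ⟨v, hv, u, hu, hvu⟩ := Submodule.mem_sup.1 (htop ▸ Submodule.mem_top :
    Pi.single 3 1 ∈ W ⊔ W.conj)
  have hu' : star u ∈ W := hu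
  have hpolar : qPolar v (star u) = 0 := by
    have h := q_add v (star u)
    rw [hiso v hv, hiso _ hu', hiso _ (W.add_mem hv hu')] at h
    linear_combination -h / 2
  have h := qHerm_add_star v (star u)
  rw [star_star, hvu, hpolar, zero_re] at h
  have : qHerm (Pi.single 3 1) = -1 := by simp [qHerm]
  linarith [qHerm_nonneg_of_q_eq_zero (hiso v hv), qHerm_nonneg_of_q_eq_zero (hiso _ hu')]

/-- Every projective line contained in the quadric `Q = {q = 0} ⊆ ℂP³` contains a real
point: for every 2-dimensional ℂ-linear subspace `W` of `ℂ⁴` on which `q` vanishes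
identically, there is a nonzero `w ∈ W` which is a ℂ-scalar multiple of a vector with
all four coordinates real. -/
theorem every_line_of_quadric_has_real_point
    (W : Submodule ℂ (Fin 4 → ℂ))
    (hW : Module.finrank ℂ W = 2)
    (hiso : ∀ w ∈ W, q w = 0) :
    ∃ w ∈ W, w ≠ 0 ∧ ∃ (c : ℂ) (x : Fin 4 → ℝ), w = c • (fun i => (x i : ℂ)) := by
  obtain ⟨v, hv, hv₀⟩ := Submodule.ne_bot_iff _ |>.1 (inf_conj_ne_bot_of_isotropic hW hiso)
  exact exists_real_point_of_star_mem (Submodule.mem_inf.1 hv).1 hv₀ (Submodule.mem_inf.1 hv).2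
end

section
/- Let q : ℂ⁴ → ℂ be the quadratic form q(z) = z₀² + z₁² + z₂² − z₃². If W is a ℂ-linear subspace of ℂ⁴ of complex dimension 2 such that q(w) = 0 for every w ∈ W, then W contains a nonzero vector of the form c • x, where c ∈ ℂ and x ∈ ℝ⁴ ⊂ ℂ⁴ is a vector with all coordinates real. -/
open Complex in
lemma key (v : Fin 4 → ℂ) (hv : q v = 0) (c : ℂ) :
    (c * v 0).re ^ 2 + (c * v 1).re ^ 2 + (c * v 2).re ^ 2 - (c * v 3).re ^ 2
      = Complex.normSq c *
        ((v 0).re ^ 2 + (v 1).re ^ 2 + (v 2).re ^ 2 - (v 3).re ^ 2) := by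
  rw [Complex.ext_iff] at hv
  obtain ⟨h1, h2⟩ := hv
  simp only [q, pow_two, Complex.add_re, Complex.sub_re, Complex.mul_re, Complex.mul_im,
    Complex.add_im, Complex.sub_im, Complex.zero_re, Complex.zero_im] at h1 h2
  simp only [Complex.mul_re, Complex.normSq_apply]
  linear_combination (-(c.re * c.im)) * h2 + (-(c.im ^ 2)) * h1

/-- If `W ⊆ ℂ⁴` is a 2-dimensional ℂ-linear subspace with `q(w) = 0` for every `w ∈ W`,
then `W` contains a nonzero vector of the form `c • x` with `c ∈ ℂ` and `x` a vector
with all four coordinates real. -/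
theorem totally_isotropic_plane_contains_real_direction
    (W : Submodule ℂ (Fin 4 → ℂ))
    (hW : Module.finrank ℂ W = 2)
    (hiso : ∀ w ∈ W, q w = 0) :
    ∃ (c : ℂ) (x : Fin 4 → ℝ), c • (fun i => (x i : ℂ)) ∈ W ∧ c • (fun i => (x i : ℂ)) ≠ 0 := by
  by_cases hex : ∃ w ∈ W, w ≠ 0 ∧ (fun i => (starRingEnd ℂ) (w i)) ∈ W
  · obtain ⟨w, hwW, hw0, hcw⟩ := hex
    by_cases hx : (fun i => (w i).re) = (0 : Fin 4 → ℝ)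
    · -- real parts all zero: w = I • (imaginary parts)
      refine ⟨Complex.I, fun i => (w i).im, ?_, ?_⟩
      · have : (Complex.I • fun i => ((w i).im : ℂ)) = w := by
          funext i
          have h0 : (w i).re = 0 := congrFun hx i
          simp only [Pi.smul_apply, smul_eq_mul]
          apply Complex.ext <;> simp [h0]
        rw [this]; exact hwW
      · intro h
        apply hw0
        have : (Complex.I • fun i => ((w i).im : ℂ)) = w := by
          funext i
          have h0 : (w i).re = 0 := congrFun hx i
          simp only [Pi.smul_apply, smul_eq_mul]
          apply Complex.ext <;> simp [h0]
        rw [← this, h]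
    · refine ⟨1, fun i => (w i).re, ?_, ?_⟩
      · rw [one_smul]
        have : (fun i => (((w i).re : ℝ) : ℂ)) =
            (2⁻¹ : ℂ) • (w + fun i => (starRingEnd ℂ) (w i)) := by
          funext i
          simp only [Pi.smul_apply, Pi.add_apply, smul_eq_mul]
          rw [Complex.add_conj]
          push_cast
          ring
        rw [this]
        exact W.smul_mem _ (W.add_mem hwW hcw)
      · rw [one_smul]
        intro h
        apply hx
        funext i
        have := congrFun h i
        simpa using this
  · exfalso
    push_neg at hex
    -- hex : ∀ w ∈ W, w ≠ 0 → conj w ∉ W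
    let φ : ↥W →ₗ[ℝ] (Fin 4 → ℝ) :=
      { toFun := fun v => fun i => ((v : Fin 4 → ℂ) i).re
        map_add' := by intro v u; funext i; simp
        map_smul' := by
          intro r v; funext i
          simp [Complex.real_smul] }
    haveI : FiniteDimensional ℝ ↥W := Module.Finite.trans ℂ ↥W
    have hfr : Module.finrank ℝ ↥W = 4 := by
      have h := Module.finrank_mul_finrank ℝ ℂ ↥W
      rw [Complex.finrank_real_complex, hW] at h
      omega
    have hinj : Function.Injective φ := by
      rw [injective_iff_map_eq_zero φ]
      intro v hv0
      have hre : ∀ i, ((v : Fin 4 → ℂ) i).re = 0 := fun i => congrFun hv0 i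
      by_contra hv
      have hvne : (v : Fin 4 → ℂ) ≠ 0 := by
        intro h; apply hv; exact Subtype.ext h
      apply hex (v : Fin 4 → ℂ) v.2 hvne
      have : (fun i => (starRingEnd ℂ) ((v : Fin 4 → ℂ) i)) = -(v : Fin 4 → ℂ) := by
        funext i
        apply Complex.ext <;> simp [hre i]
      rw [this]
      exact W.neg_mem v.2
    have hsurj : Function.Surjective φ :=
      (LinearMap.injective_iff_surjective_of_finrank_eq_finrank
        (by rw [hfr, Module.finrank_fin_fun])).mp hinj
    obtain ⟨v, hv⟩ := hsurj (fun i => if i = 3 then 1 else 0)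
    have hre : ∀ i, ((v : Fin 4 → ℂ) i).re = if i = 3 then (1:ℝ) else 0 :=
      fun i => congrFun hv i
    set u : Fin 4 → ℂ := (v : Fin 4 → ℂ) with hu
    have hqu : q u = 0 := hiso u v.2
    have h3 : u 3 ≠ 0 := by
      intro h
      have := hre 3
      rw [h] at this
      simp at this
    set c : ℂ := Complex.I * (starRingEnd ℂ) (u 3) with hc
    have hcne : c ≠ 0 := by
      apply mul_ne_zero Complex.I_ne_zero
      simpa using h3
    have hk := key u hqu c
    have hc3 : (c * u 3).re = 0 := by
      rw [hc, mul_assoc, Complex.conj_mul']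
      simp [Complex.mul_re, ← Complex.ofReal_pow]
    have h0 : (u 0).re = 0 := by simpa using hre 0
    have h1 : (u 1).re = 0 := by simpa using hre 1
    have h2 : (u 2).re = 0 := by simpa using hre 2
    have h3' : (u 3).re = 1 := by simpa using hre 3
    rw [hc3, h0, h1, h2, h3'] at hk
    have hpos : 0 < Complex.normSq c := Complex.normSq_pos.mpr hcne
    nlinarith [sq_nonneg (c * u 0).re, sq_nonneg (c * u 1).re, sq_nonneg (c * u 2).re]
end

section
/- Let q : ℂ⁴ → ℂ be the quadratic form q(z) = z₀² + z₁² + z₂² − z₃², and let B be its associated symmetric bilinear form, B(v,w) = v₀w₀ + v₁w₁ + v₂w₂ − v₃w₃. Let v ∈ ℂ⁴ be a nonzero vector with q(v) = 0 which is not a ℂ-scalar multiple of any vector in ℝ⁴, and suppose that q does not vanish identically on the span spanℂ{v, v̄} (equivalently B(v, v̄) ≠ 0, where v̄ is the coordinatewise complex conjugate of v). Then every nonzero vector x ∈ spanℂ{v, v̄} with all coordinates real satisfies q(x) ≠ 0. -/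
/-- The associated symmetric bilinear form `B(v,w) = v₀w₀ + v₁w₁ + v₂w₂ − v₃w₃`. -/
noncomputable def B (v w : Fin 4 → ℂ) : ℂ := v 0 * w 0 + v 1 * w 1 + v 2 * w 2 - v 3 * w 3

/-- The coordinatewise complex conjugate of a vector of `ℂ⁴`. -/
noncomputable def conjVec (v : Fin 4 → ℂ) : Fin 4 → ℂ := fun i => starRingEnd ℂ (v i)

lemma q_expand (a b : ℂ) (v w : Fin 4 → ℂ) :
    q (a • v + b • w) = a ^ 2 * q v + 2 * a * b * B v w + b ^ 2 * q w := by
  simp only [q, B, Pi.add_apply, Pi.smul_apply, smul_eq_mul]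
  ring

/-- If `v` is a nonzero isotropic vector for `q`, not a ℂ-scalar multiple of a real
vector, and `B(v, v̄) ≠ 0` (i.e. `q` does not vanish identically on `spanℂ{v, v̄}`),
then every nonzero real-coordinate vector in `spanℂ{v, v̄}` satisfies `q(x) ≠ 0`. -/
theorem real_points_of_conjugate_line_external
    (v : Fin 4 → ℂ) (hv : v ≠ 0) (hqv : q v = 0)
    (hnotreal : ¬ ∃ (c : ℂ) (x : Fin 4 → ℝ), v = c • (fun i => (x i : ℂ)))
    (hB : B v (conjVec v) ≠ 0) :
    ∀ x ∈ Submodule.span ℂ ({v, conjVec v} : Set (Fin 4 → ℂ)),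
      x ≠ 0 → (∀ i, (x i).im = 0) → q x ≠ 0 := by
  intro x hx hx0 hxre hqx
  obtain ⟨a, b, hab⟩ := Submodule.mem_span_pair.mp hx
  have hqvc : q (conjVec v) = 0 := by
    have : q (conjVec v) = starRingEnd ℂ (q v) := by
      simp [q, conjVec, map_add, map_sub, map_pow]
    rw [this, hqv, map_zero]
  have hexp : q x = 2 * a * b * B v (conjVec v) := by
    rw [← hab, q_expand, hqv, hqvc]; ring
  have hab0 : a = 0 ∨ b = 0 := by
    rw [hexp] at hqx
    rcases mul_eq_zero.mp hqx with h | h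
    · rcases mul_eq_zero.mp h with h | h
      · rcases mul_eq_zero.mp h with h | h
        · exact absurd h two_ne_zero
        · exact Or.inl h
      · exact Or.inr h
    · exact absurd h hB
  have hxr : x = fun i => ((fun i => (x i).re) i : ℂ) := by
    funext i
    simp [Complex.ext_iff, hxre i]
  rcases hab0 with ha | hb
  · -- x = b • conjVec v, so conj x = conj b • v, and x = conj x
    subst ha
    have hb0 : b ≠ 0 := by
      rintro rfl
      apply hx0
      rw [← hab]; simp
    have hxb : x = b • conjVec v := by rw [← hab]; simp
    have hconj : x = starRingEnd ℂ b • v := by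
      funext i
      have h1 : starRingEnd ℂ (x i) = x i := Complex.conj_eq_iff_im.mpr (hxre i)
      have : starRingEnd ℂ (x i) = starRingEnd ℂ b * v i := by
        rw [hxb]; simp [conjVec]
      rw [h1] at this
      simpa using this
    apply hnotreal
    have hb0' : starRingEnd ℂ b ≠ 0 := by simpa using hb0
    refine ⟨(starRingEnd ℂ b)⁻¹, fun i => (x i).re, ?_⟩
    rw [← hxr, hconj, smul_smul, inv_mul_cancel₀ hb0', one_smul]
  · subst hb
    have ha0 : a ≠ 0 := by
      rintro rfl
      apply hx0
      rw [← hab]; simp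
    have hxa : x = a • v := by rw [← hab]; simp
    apply hnotreal
    refine ⟨a⁻¹, fun i => (x i).re, ?_⟩
    rw [← hxr, hxa]
    rw [smul_smul, inv_mul_cancel₀ ha0, one_smul]
end

section
/- Let q : ℂ⁴ → ℂ be the quadratic form q(z) = z₀² + z₁² + z₂² − z₃², and let B be its associated symmetric bilinear form. Let v ∈ ℂ⁴ be nonzero with q(v) = 0 and B(v, v̄) = 0, where v̄ is the coordinatewise complex conjugate of v. Then there exists a nonzero vector x ∈ spanℂ{v, v̄} with all four coordinates real such that q(x) = 0. -/
lemma q_conjVec (v : Fin 4 → ℂ) : q (conjVec v) = starRingEnd ℂ (q v) := by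
  simp [q, conjVec, map_add, map_sub, map_pow]

/-- If `v ≠ 0`, `q(v) = 0` and `B(v, v̄) = 0` (i.e. the line through `P` and `P̄` lies
on the quadric), then `spanℂ{v, v̄}` contains a nonzero vector with all four
coordinates real on which `q` vanishes. -/
theorem conjugate_line_in_quadric_has_real_isotropic_point
    (v : Fin 4 → ℂ) (hv : v ≠ 0) (hqv : q v = 0)
    (hB : B v (conjVec v) = 0) :
    ∃ x ∈ Submodule.span ℂ ({v, conjVec v} : Set (Fin 4 → ℂ)),
      x ≠ 0 ∧ (∀ i, (x i).im = 0) ∧ q x = 0 := by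
  have hvmem : v ∈ Submodule.span ℂ ({v, conjVec v} : Set (Fin 4 → ℂ)) :=
    Submodule.subset_span (by simp)
  have hcmem : conjVec v ∈ Submodule.span ℂ ({v, conjVec v} : Set (Fin 4 → ℂ)) :=
    Submodule.subset_span (by simp)
  have hqc : q (conjVec v) = 0 := by rw [q_conjVec, hqv, map_zero]
  by_cases h : v + conjVec v = 0
  · -- use x = I • (v - conjVec v)
    refine ⟨Complex.I • (v - conjVec v), Submodule.smul_mem _ _ (Submodule.sub_mem _ hvmem hcmem),
      ?_, ?_, ?_⟩
    · have hc : conjVec v = -v := by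
        have := eq_neg_of_add_eq_zero_right h
        simpa using this
      have h2 : v - conjVec v = (2 : ℂ) • v := by
        rw [hc, sub_neg_eq_add, two_smul]
      rw [h2]
      simp only [smul_smul]
      exact smul_ne_zero (by norm_num [Complex.ext_iff]) hv
    · intro i
      simp [conjVec, Complex.mul_im, Complex.sub_re, Complex.sub_im, Complex.conj_re,
        Complex.conj_im, Complex.I_re, Complex.I_im]
    · simp only [q, B, conjVec] at hqv hB hqc ⊢
      simp only [Pi.smul_apply, Pi.sub_apply, smul_eq_mul, conjVec]
      have hI : Complex.I ^ 2 = -1 := Complex.I_sq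
      linear_combination Complex.I ^ 2 * hqv + Complex.I ^ 2 * hqc -
        2 * Complex.I ^ 2 * hB
  · -- use x = v + conjVec v
    refine ⟨v + conjVec v, Submodule.add_mem _ hvmem hcmem, h, ?_, ?_⟩
    · intro i
      simp [conjVec]
    · simp only [q, B, conjVec] at hqv hB hqc ⊢
      simp only [Pi.add_apply, conjVec]
      linear_combination hqv + hqc + 2 * hB
end
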